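/- arXiv:0806.0168 — 2 statements merged into one kernel-verified Lean document; each statement's English description precedes it below -/
import Mathlib

section
/- Let d be an integer with 2 ≤ d ≤ 5, and let A, B be invertible d×d complex matrices satisfying the braid relation A*B*A = B*A*B. Suppose the subgroup G of GL(d,ℂ) generated by A and B is finite, the pair (A,B) is irreducible, and G is imprimitive. Then there exist a nonzero complex number χ and an integer r with 2 ≤ r ≤ d such that every complex number of the form χ·ζ with ζ^r = 1 is an eigenvalue of A. -/
/-!
`A` permutes the blocks `V i` of the imprimitivity system. If it fixed all of them, then for each
block `W` the braid relation gives `B (B W) = B A B W = A B A W = B W`, so `B` would fix every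
block too, and then so would the whole group, which is absurd. Hence `A` moves some block `V i`
along a cycle of length `r ≥ 2`, and `r ≤ d` because the blocks of the cycle are independent.
Now `A ^ r` stabilises `V i`; if `A ^ r v = χ ^ r • v` with `0 ≠ v ∈ V i`, then for every
`ζ ^ r = 1` the vector `∑ k < r, (χ ζ) ^ (r - 1 - k) • A ^ k v` is an eigenvector of `A` for the
eigenvalue `χ ζ`.
-/

/-- The pair of matrices `(A, B)` acting on `ℂ^d` is irreducible if the only subspaces
invariant under both `A` and `B` are `0` and all of `ℂ^d`. -/
def MatPairIrreducible {d : ℕ} (A B : Matrix (Fin d) (Fin d) ℂ) : Prop :=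
  ∀ W : Submodule ℂ (Fin d → ℂ),
    (∀ v ∈ W, A.mulVec v ∈ W) → (∀ v ∈ W, B.mulVec v ∈ W) → W = ⊥ ∨ W = ⊤

/-- The subgroup of `GL(d, ℂ)` generated by the (invertible) matrices `A` and `B`. -/
def matGenGroup {d : ℕ} (A B : Matrix (Fin d) (Fin d) ℂ) :
    Subgroup (Matrix (Fin d) (Fin d) ℂ)ˣ :=
  Subgroup.closure {g : (Matrix (Fin d) (Fin d) ℂ)ˣ |
    (g : Matrix (Fin d) (Fin d) ℂ) = A ∨ (g : Matrix (Fin d) (Fin d) ℂ) = B}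

/-- A subgroup `G ≤ GL(d, ℂ)` is imprimitive if there are `n ≥ 2` nonzero subspaces
`V₁, …, Vₙ` of `ℂ^d` whose internal direct sum is `ℂ^d`, such that every element of `G`
maps each `Vᵢ` onto some `Vⱼ`, and some element of `G` maps some `Vᵢ` onto `Vⱼ` with
`j ≠ i`. -/
def MatGroupImprimitive {d : ℕ} (G : Subgroup (Matrix (Fin d) (Fin d) ℂ)ˣ) : Prop :=
  ∃ n : ℕ, 2 ≤ n ∧ ∃ V : Fin n → Submodule ℂ (Fin d → ℂ),
    (∀ i, V i ≠ ⊥) ∧ iSupIndep V ∧ (⨆ i, V i) = ⊤ ∧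
    (∀ g ∈ G, ∀ i, ∃ j,
      (V i).map (Matrix.mulVecLin (g : Matrix (Fin d) (Fin d) ℂ)) = V j) ∧
    (∃ g ∈ G, ∃ i j, i ≠ j ∧
      (V i).map (Matrix.mulVecLin (g : Matrix (Fin d) (Fin d) ℂ)) = V j)

open Function Module

theorem Function.two_le_minimalPeriod {α : Type*} {σ : α → α} {i : α} (hi : i ∈ periodicPts σ)
    (hσi : σ i ≠ i) : 2 ≤ minimalPeriod σ i := by
  have h0 := minimalPeriod_pos_of_mem_periodicPts hi
  have h1 : minimalPeriod σ i ≠ 1 := mt minimalPeriod_eq_one_iff_isFixedPt.mp hσi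
  omega

section Blocks

variable {K M ι : Type*} [Field K] [AddCommGroup M] [Module K M] {V : ι → Submodule K M}

theorem iSupIndep.card_le_finrank [Fintype ι] [FiniteDimensional K M] (hV : iSupIndep V)
    (hV0 : ∀ i, V i ≠ ⊥) : Fintype.card ι ≤ finrank K M := by
  choose v hv hv0 using fun i => Submodule.exists_mem_ne_zero_of_ne_bot (hV0 i)
  exact (hV.linearIndependent V hv hv0).fintype_card_le_finrank

theorem iSupIndep.minimalPeriod_le_finrank [FiniteDimensional K M] (hV : iSupIndep V)
    (hV0 : ∀ i, V i ≠ ⊥) (σ : ι → ι) (i : ι) : minimalPeriod σ i ≤ finrank K M := by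
  have hinj : Injective fun k : Fin (minimalPeriod σ i) => σ^[k] i := fun k l h =>
    Fin.ext (iterate_injOn_Iio_minimalPeriod k.isLt l.isLt h)
  simpa using (hV.comp hinj).card_le_finrank fun k => hV0 _

variable {f : End K M} {σ : ι → ι}

theorem Module.End.pow_apply_mem_iterate (hσ : ∀ j, ∀ x ∈ V j, f x ∈ V (σ j)) (k : ℕ)
    {j : ι} {x : M} (hx : x ∈ V j) : (f ^ k) x ∈ V (σ^[k] j) := by
  induction k generalizing j x with
  | zero => simpa using hx
  | succ k ih =>
    rw [pow_succ, Module.End.mul_apply, iterate_succ_apply]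
    exact ih (hσ j x hx)

/-- The eigenvector is `∑ k < r, μ ^ (r - 1 - k) • f ^ k v`, which is nonzero because its
component in `V i` is `μ ^ (r - 1) • v`. -/
theorem Module.End.hasEigenvalue_of_pow_minimalPeriod (hV : iSupIndep V)
    (hσ : ∀ j, ∀ x ∈ V j, f x ∈ V (σ j)) {i : ι} (hi : i ∈ periodicPts σ) {v : M}
    (hv : v ∈ V i) (hv0 : v ≠ 0) {μ : K} (hμ : μ ≠ 0)
    (hfv : (f ^ minimalPeriod σ i) v = μ ^ minimalPeriod σ i • v) : f.HasEigenvalue μ := by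
  set r := minimalPeriod σ i
  have hr : 0 < r := minimalPeriod_pos_of_mem_periodicPts hi
  let x : Fin r → M := fun k => μ ^ (r - 1 - k) • (f ^ (k : ℕ)) v
  set P := ∑ k ∈ Finset.range r, f ^ k * algebraMap K (End K M) μ ^ (r - 1 - k)
  have hw : ∑ k, x k = P v := by
    rw [Fin.sum_univ_eq_sum_range (fun k => μ ^ (r - 1 - k) • (f ^ k) v), LinearMap.sum_apply]
    simp [← map_pow, Module.algebraMap_end_apply]
  have heig : f (∑ k, x k) = μ • ∑ k, x k := by
    rw [hw, ← sub_eq_zero]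
    calc f (P v) - μ • P v = ((f - algebraMap K (End K M) μ) * P) v := by
          rw [Module.End.mul_apply, LinearMap.sub_apply, Module.algebraMap_end_apply]
      _ = (f ^ r - algebraMap K (End K M) μ ^ r) v := by
          rw [(Algebra.commute_algebraMap_left μ f).symm.mul_geom_sum₂]
      _ = 0 := by rw [LinearMap.sub_apply, ← map_pow, Module.algebraMap_end_apply, hfv, sub_self]
  have hw0 : ∑ k, x k ≠ 0 := by
    intro h0
    have horbit : iSupIndep fun k : Fin r => V (σ^[k] i) := hV.comp fun k l h =>
      Fin.ext (iterate_injOn_Iio_minimalPeriod k.isLt l.isLt h)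
    have := (iSupIndep_iff_finsetSum_eq_zero_imp_eq_zero _).mp horbit Finset.univ x
      (fun k _ => Submodule.smul_mem _ _ (f.pow_apply_mem_iterate hσ k hv)) h0 ⟨0, hr⟩
      (Finset.mem_univ _)
    simp [x, hμ, hv0] at this
  exact Module.End.hasEigenvalue_of_hasEigenvector ⟨Module.End.mem_eigenspace_iff.mpr heig, hw0⟩

theorem Module.End.exists_forall_pow_eq_one_hasEigenvalue_mul [IsAlgClosed K]
    [FiniteDimensional K M] (hf : Function.Injective f) (hV : iSupIndep V)
    (hσ : ∀ j, ∀ x ∈ V j, f x ∈ V (σ j)) {i : ι} (hi : i ∈ periodicPts σ) (hVi : V i ≠ ⊥) :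
    ∃ χ : K, χ ≠ 0 ∧ ∀ ζ : K, ζ ^ minimalPeriod σ i = 1 → f.HasEigenvalue (χ * ζ) := by
  set r := minimalPeriod σ i
  have hr : 0 < r := minimalPeriod_pos_of_mem_periodicPts hi
  have hVi_stable : ∀ x ∈ V i, (f ^ r) x ∈ V i := fun x hx =>
    (isPeriodicPt_minimalPeriod σ i).eq ▸ f.pow_apply_mem_iterate hσ r hx
  have : Nontrivial (V i) := Submodule.nontrivial_iff_ne_bot.mpr hVi
  obtain ⟨μ, hμ⟩ := Module.End.exists_eigenvalue ((f ^ r).restrict hVi_stable)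
  obtain ⟨⟨v, hv⟩, hμv, hv0⟩ := hμ.exists_hasEigenvector
  have hfv : (f ^ r) v = μ • v := congr_arg Subtype.val (Module.End.mem_eigenspace_iff.mp hμv)
  have hv0 : v ≠ 0 := by simpa using hv0
  have hμ0 : μ ≠ 0 := by
    rintro rfl
    exact hv0 (hf.iterate r (by simpa [← Module.End.coe_pow] using hfv))
  obtain ⟨χ, rfl⟩ := IsAlgClosed.exists_pow_nat_eq μ hr
  have hχ : χ ≠ 0 := by rintro rfl; simp [hr.ne'] at hμ0
  refine ⟨χ, hχ, fun ζ hζ => f.hasEigenvalue_of_pow_minimalPeriod hV hσ hi hv hv0 ?_ ?_⟩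
  · exact mul_ne_zero hχ (by rintro rfl; simp [hr.ne'] at hζ)
  · rwa [mul_pow, hζ, mul_one]

end Blocks

theorem Submodule.map_eq_self_of_braid {R M : Type*} [Semiring R] [AddCommMonoid M] [Module R M]
    {f g : Module.End R M} (hbraid : f * g * f = g * f * g) (hg : Function.Injective g)
    {W : Submodule R M} (hfW : W.map f = W) (hfgW : (W.map g).map f = W.map g) :
    W.map g = W := by
  refine Submodule.map_injective_of_injective hg ?_
  calc (W.map g).map g = W.map (g * f * g) := by
        rw [Module.End.mul_eq_comp, Module.End.mul_eq_comp, Submodule.map_comp,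
          Submodule.map_comp, hfgW]
    _ = W.map (f * g * f) := by rw [hbraid]
    _ = W.map g := by
        rw [Module.End.mul_eq_comp, Module.End.mul_eq_comp, Submodule.map_comp,
          Submodule.map_comp, hfW, hfgW]

section MatrixBlocks

variable {n R ι : Type*} [Fintype n] [DecidableEq n] [CommSemiring R]
  {V : ι → Submodule R (n → R)}

def blockStabilizer (V : ι → Submodule R (n → R)) : Subgroup (Matrix n n R)ˣ where
  carrier := {g | ∀ i, (V i).map (g : Matrix n n R).mulVecLin = V i}
  mul_mem' {g h} hg hh i := by
    rw [Units.val_mul, Matrix.mulVecLin_mul, Submodule.map_comp, hh i, hg i]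
  one_mem' i := by rw [Units.val_one, Matrix.mulVecLin_one, Submodule.map_id]
  inv_mem' {g} hg i := by
    calc (V i).map (↑g⁻¹ : Matrix n n R).mulVecLin
        = ((V i).map (g : Matrix n n R).mulVecLin).map (↑g⁻¹ : Matrix n n R).mulVecLin := by
          rw [hg i]
      _ = V i := by
          rw [← Submodule.map_comp, ← Matrix.mulVecLin_mul, Units.inv_mul, Matrix.mulVecLin_one,
            Submodule.map_id]

theorem mem_blockStabilizer {g : (Matrix n n R)ˣ} :
    g ∈ blockStabilizer V ↔ ∀ i, (V i).map (g : Matrix n n R).mulVecLin = V i :=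
  Iff.rfl

theorem Matrix.map_mulVecLin_eq_self_of_braid {A B : Matrix n n R}
    (hbraid : A * B * A = B * A * B) (hB : IsUnit B)
    (hA : ∀ i, (V i).map A.mulVecLin = V i) (hBV : ∀ i, ∃ j, (V i).map B.mulVecLin = V j)
    (i : ι) : (V i).map B.mulVecLin = V i := by
  have hbraid' :
      A.mulVecLin * B.mulVecLin * A.mulVecLin = B.mulVecLin * A.mulVecLin * B.mulVecLin := by
    simp only [Module.End.mul_eq_comp, ← Matrix.mulVecLin_mul, hbraid]
  obtain ⟨j, hj⟩ := hBV i
  exact Submodule.map_eq_self_of_braid hbraid' (Matrix.mulVec_injective_of_isUnit hB) (hA i)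
    (by rw [hj, hA j])

end MatrixBlocks

theorem matGenGroup_le_blockStabilizer_of_braid {d : ℕ} {A B : Matrix (Fin d) (Fin d) ℂ}
    {ι : Type*} {V : ι → Submodule ℂ (Fin d → ℂ)} (hbraid : A * B * A = B * A * B)
    (hB : IsUnit B) (hA : ∀ i, (V i).map A.mulVecLin = V i)
    (hBV : ∀ i, ∃ j, (V i).map B.mulVecLin = V j) : matGenGroup A B ≤ blockStabilizer V :=
  (Subgroup.closure_le _).mpr fun _ hg => mem_blockStabilizer.mpr <| by
    rcases hg with h | h <;> rw [h]
    exacts [hA, Matrix.map_mulVecLin_eq_self_of_braid hbraid hB hA hBV]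

theorem stmt3_general (d : ℕ)
    (A B : Matrix (Fin d) (Fin d) ℂ) (hA : IsUnit A) (hB : IsUnit B)
    (hbraid : A * B * A = B * A * B)
    (himp : MatGroupImprimitive (matGenGroup A B)) :
    ∃ χ : ℂ, χ ≠ 0 ∧ ∃ r : ℕ, 2 ≤ r ∧ r ≤ d ∧
      ∀ ζ : ℂ, ζ ^ r = 1 → χ * ζ ∈ spectrum ℂ A := by
  obtain ⟨n, -, V, hV0, hV, -, hperm, g, hg, i₀, j₀, hij, hgV⟩ := himp
  have hpermA : ∀ i, ∃ j, (V i).map A.mulVecLin = V j := by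
    simpa only [hA.unit_spec] using hperm hA.unit (Subgroup.subset_closure (Or.inl hA.unit_spec))
  have hpermB : ∀ i, ∃ j, (V i).map B.mulVecLin = V j := by
    simpa only [hB.unit_spec] using hperm hB.unit (Subgroup.subset_closure (Or.inr hB.unit_spec))
  choose σ hσ using hpermA
  have hσinj : Function.Injective σ := fun i j h => hV.injective hV0 <|
    Submodule.map_injective_of_injective (Matrix.mulVec_injective_of_isUnit hA)
      (by rw [hσ, hσ, h])
  obtain ⟨i, hi⟩ : ∃ i, σ i ≠ i := by
    by_contra! hfix
    have hAV : ∀ i, (V i).map A.mulVecLin = V i := fun i => (hσ i).trans (congrArg V (hfix i))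
    have hG := matGenGroup_le_blockStabilizer_of_braid hbraid hB hAV hpermB
    exact hij (hV.injective hV0 ((hG hg i₀).symm.trans hgV))
  have hper := hσinj.mem_periodicPts i
  obtain ⟨χ, hχ, hχA⟩ := Module.End.exists_forall_pow_eq_one_hasEigenvalue_mul
    (Matrix.mulVec_injective_of_isUnit hA) hV (fun j _ hx => hσ j ▸ Submodule.mem_map_of_mem hx)
    hper (hV0 i)
  refine ⟨χ, hχ, minimalPeriod σ i, ?_, ?_, fun ζ hζ => ?_⟩
  · exact two_le_minimalPeriod hper hi
  · simpa using hV.minimalPeriod_le_finrank hV0 σ i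
  · rw [← Matrix.spectrum_toLin']
    exact Module.End.hasEigenvalue_iff_mem_spectrum.mp (hχA ζ hζ)

theorem stmt3 (d : ℕ) (hd2 : 2 ≤ d) (hd5 : d ≤ 5)
    (A B : Matrix (Fin d) (Fin d) ℂ) (hA : IsUnit A) (hB : IsUnit B)
    (hbraid : A * B * A = B * A * B)
    (hirr : MatPairIrreducible A B)
    (hfin : Set.Finite (matGenGroup A B : Set (Matrix (Fin d) (Fin d) ℂ)ˣ))
    (himp : MatGroupImprimitive (matGenGroup A B)) :
    ∃ χ : ℂ, χ ≠ 0 ∧ ∃ r : ℕ, 2 ≤ r ∧ r ≤ d ∧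
      ∀ ζ : ℂ, ζ ^ r = 1 → χ * ζ ∈ spectrum ℂ A :=
  stmt3_general d A B hA hB hbraid himp
end

section
/- Let d be an integer with 2 ≤ d ≤ 5. Let π₁, π₂ be permutations of {1,…,d}, let D₁, D₂ be invertible diagonal d×d complex matrices, and set A = D₁·P(π₁) and B = D₂·P(π₂), where P(π) denotes the permutation matrix of π. Suppose A*B*A = B*A*B, the pair (A,B) is irreducible, every eigenvalue of A is a root of unity, and the group G generated by A and B is imprimitive. Then the spectrum S of A (as a set) has one of the following forms: (a) S = {χ·ζ : ζ^d = 1} for some root of unity χ; or (b) d = 3 and S = {α, χ, −χ} for some roots of unity α, χ; or (c) d = 4 and S = {α, χ, χω, χω²} for some roots of unity α, χ, where ω is a primitive 3rd root of unity. -/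
/-- `z` is a root of unity. -/
def IsRootOfUnity (z : ℂ) : Prop := ∃ n : ℕ, 0 < n ∧ z ^ n = 1

/-!
Write `A = diag(a) · P(σ)` and `B = diag(b) · P(τ)`, so that `(A v) i = a i * v (σ i)`.
Testing the braid relation on standard basis vectors gives `στσ = τστ`, and irreducibility
forces `⟨σ, τ⟩` to be transitive (a `σ, τ`-stable set of coordinates spans an invariant
subspace). For `d ≤ 5` a finite search over such pairs shows that `σ` is a `d`-cycle, or, for
`d = 3, 4`, a `(d-1)`-cycle and a fixed point `x`. An eigenvector of `A` that is nonzero at a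
point of an `m`-cycle through `j` forces `μ ^ m = ∏ₖ a (σᵏ j)`, and conversely every such `μ`
has an eigenvector supported on that cycle; a fixed point `x` contributes the eigenvalue `a x`.
-/

open Matrix Equiv Finset

section Monomial

variable {n R : Type*} [Fintype n] [DecidableEq n]

theorem mulVec_diagonal_mul_permMatrix [CommRing R] (a : n → R) (σ : Perm n) (v : n → R) :
    (diagonal a * σ.permMatrix R) *ᵥ v = fun i => a i * v (σ i) := by
  ext i
  rw [← mulVec_mulVec, permMatrix_mulVec, mulVec_diagonal, Function.comp_apply]

theorem Matrix.IsDiag.exists_eq_diagonal_of_isUnit [Field R] {D : Matrix n n R} (hD : D.IsDiag)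
    (hU : IsUnit D) : ∃ a : n → R, D = diagonal a ∧ ∀ i, a i ≠ 0 := by
  refine ⟨D.diag, hD.diagonal_diag.symm, fun i => ?_⟩
  rw [← hD.diagonal_diag, isUnit_diagonal, Pi.isUnit_iff] at hU
  exact (hU i).ne_zero

theorem Matrix.mem_spectrum_iff_exists_mulVec_eq_smul [Field R] (A : Matrix n n R) (μ : R) :
    μ ∈ spectrum R A ↔ ∃ v ≠ 0, A *ᵥ v = μ • v := by
  rw [← spectrum_toLin', ← Module.End.hasEigenvalue_iff_mem_spectrum,
    Module.End.hasEigenvalue_iff, Submodule.ne_bot_iff]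
  simp [and_comm]

theorem braid_apply_of_monomial_braid [CommRing R] [IsDomain R] {a b : n → R} (ha : ∀ i, a i ≠ 0)
    (hb : ∀ i, b i ≠ 0) {σ τ : Perm n}
    (h : diagonal a * σ.permMatrix R * (diagonal b * τ.permMatrix R) *
        (diagonal a * σ.permMatrix R) =
      diagonal b * τ.permMatrix R * (diagonal a * σ.permMatrix R) *
        (diagonal b * τ.permMatrix R))
    (x : n) : σ (τ (σ x)) = τ (σ (τ x)) := by
  have hA := mulVec_diagonal_mul_permMatrix a σ
  have hB := mulVec_diagonal_mul_permMatrix b τ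
  generalize diagonal a * σ.permMatrix R = A at h hA
  generalize diagonal b * τ.permMatrix R = B at h hB
  have hx := congrFun (congrArg (· *ᵥ Pi.single (σ (τ (σ x))) (1 : R)) h) x
  simp only [← mulVec_mulVec, hA, hB, Pi.single_eq_same, mul_one] at hx
  by_contra hne
  rw [Pi.single_eq_of_ne (Ne.symm hne), mul_zero, mul_zero, mul_zero] at hx
  exact mul_ne_zero (ha x) (mul_ne_zero (hb _) (ha _)) hx

end Monomial

theorem eq_empty_or_eq_univ_of_matPairIrreducible {d : ℕ} {a b : Fin d → ℂ} {σ τ : Perm (Fin d)}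
    (hirr : MatPairIrreducible (diagonal a * σ.permMatrix ℂ) (diagonal b * τ.permMatrix ℂ))
    (s : Finset (Fin d)) (hs : ∀ i ∈ s, σ i ∈ s ∧ τ i ∈ s) : s = ∅ ∨ s = univ := by
  set W : Submodule ℂ (Fin d → ℂ) := Submodule.pi s fun _ => ⊥
  have mem_W (v : Fin d → ℂ) : v ∈ W ↔ ∀ i ∈ s, v i = 0 := by simp [W, Submodule.mem_pi]
  have mapsTo (c : Fin d → ℂ) (ρ : Perm (Fin d)) (hρ : ∀ i ∈ s, ρ i ∈ s) (v : Fin d → ℂ)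
      (hv : v ∈ W) : (diagonal c * ρ.permMatrix ℂ) *ᵥ v ∈ W := by
    rw [mem_W] at hv ⊢
    intro i hi
    simp [mulVec_diagonal_mul_permMatrix, hv _ (hρ i hi)]
  have single_mem (i : Fin d) : Pi.single i 1 ∈ W ↔ i ∉ s := by
    rw [mem_W]
    refine ⟨fun h hi => by simpa using h i hi, fun hi k hk => ?_⟩
    exact Pi.single_eq_of_ne (by rintro rfl; exact hi hk) _
  rcases hirr W (mapsTo a σ fun i hi => (hs i hi).1) (mapsTo b τ fun i hi => (hs i hi).2)
    with hW | hW
  · refine Or.inr (eq_univ_of_forall fun i => not_not.1 fun hi => ?_)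
    have h := (single_mem i).2 hi
    rw [hW, Submodule.mem_bot] at h
    simpa using congrFun h i
  · exact Or.inl <| eq_empty_of_forall_notMem fun i => (single_mem i).1 (hW ▸ Submodule.mem_top)

section Eigenvector

variable {n R : Type*} [CommRing R] {a : n → R} {f : n → n} {v : n → R} {μ : R}

theorem prod_mul_apply_iterate (hv : ∀ i, a i * v (f i) = μ * v i) (j : n) (m : ℕ) :
    (∏ k ∈ range m, a (f^[k] j)) * v (f^[m] j) = μ ^ m * v j := by
  induction m with
  | zero => simp
  | succ m ih =>
    rw [prod_range_succ, Function.iterate_succ_apply', mul_assoc, hv, pow_succ]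
    linear_combination μ * ih

theorem pow_eq_prod_of_iterate_eq [IsDomain R] (hv : ∀ i, a i * v (f i) = μ * v i) {j : n}
    (hvj : v j ≠ 0) {m : ℕ} (hper : f^[m] j = j) : μ ^ m = ∏ k ∈ range m, a (f^[k] j) := by
  have h := prod_mul_apply_iterate hv j m
  rw [hper] at h
  exact (mul_right_cancel₀ hvj h).symm

theorem ne_zero_of_apply_iterate_ne_zero [IsDomain R] (ha : ∀ i, a i ≠ 0)
    (hv : ∀ i, a i * v (f i) = μ * v i) {j : n} {m : ℕ} (h : v (f^[m] j) ≠ 0) : v j ≠ 0 := by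
  intro hj
  have := prod_mul_apply_iterate hv j m
  rw [hj, mul_zero] at this
  exact mul_ne_zero (prod_ne_zero_iff.2 fun k _ => ha _) h this

end Eigenvector

theorem exists_periodic_coeffs_of_pow_eq_prod {n K : Type*} [Field K] {a : n → K} {f : n → n}
    (ha : ∀ i, a i ≠ 0) {j : n} {m : ℕ} (hper : f^[m] j = j) {μ : K}
    (hμ : μ ^ m = ∏ k ∈ range m, a (f^[k] j)) :
    ∃ c : ℕ → K, c 0 = 1 ∧ (∀ k, a (f^[k] j) * c (k + 1) = μ * c k) ∧ ∀ k, c (k % m) = c k := by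
  have hP (k : ℕ) : ∏ l ∈ range k, a (f^[l] j) ≠ 0 := prod_ne_zero_iff.2 fun l _ => ha _
  set c : ℕ → K := fun k => μ ^ k / ∏ l ∈ range k, a (f^[l] j)
  have c_add (k : ℕ) : c (m + k) = c k := by
    have hprod : ∏ l ∈ range (m + k), a (f^[l] j) = μ ^ m * ∏ l ∈ range k, a (f^[l] j) := by
      rw [prod_range_add, hμ]
      refine congrArg _ (prod_congr rfl fun l _ => ?_)
      rw [add_comm, Function.iterate_add_apply, hper]
    simp only [c, hprod, pow_add]
    field_simp [hP k, hP m, hμ]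
  refine ⟨c, by simp [c], fun k => ?_, fun k => ?_⟩
  · simp only [c, prod_range_succ, pow_succ]
    field_simp [hP k, ha (f^[k] j)]
  · conv_rhs => rw [← Nat.mod_add_div k m]
    induction k / m with
    | zero => simp
    | succ q ih => rw [Nat.mul_succ, ← add_assoc, add_comm _ m, c_add, ih]

-- reducible, so that `decide` finds its `Decidable` instance
abbrev IsCycleWithFixedPoints {α : Type*} (f : α → α) (j : α) (m : ℕ) (F : Finset α) : Prop :=
  0 < m ∧ f^[m] j = j ∧ (∀ k < m, ∀ l < m, f^[k] j = f^[l] j → k = l) ∧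
    (∀ x ∈ F, f x = x) ∧ ∀ i ∉ F, ∃ k < m, f^[k] j = i

section Spectrum

variable {n K : Type*} [Fintype n] [DecidableEq n] [Field K] {a : n → K} {σ : Perm n}

theorem mem_spectrum_of_pow_eq_prod (ha : ∀ i, a i ≠ 0) {j : n} {m : ℕ} {μ : K} (hm : 0 < m)
    (hper : σ^[m] j = j) (hinj : ∀ k < m, ∀ l < m, σ^[k] j = σ^[l] j → k = l)
    (hμ : μ ^ m = ∏ k ∈ range m, a (σ^[k] j)) :
    μ ∈ spectrum K (diagonal a * σ.permMatrix K) := by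
  obtain ⟨c, c_zero, c_succ, c_mod⟩ := exists_periodic_coeffs_of_pow_eq_prod ha hper hμ
  -- the eigenvector takes the value `c k` at `σ^[k] j`, which is well defined by `c_mod`
  set v : n → K := fun i => ∑ k ∈ range m, if σ^[k] j = i then c k else 0
  have v_iterate (k : ℕ) : v (σ^[k] j) = c k := by
    rw [← c_mod, ← Function.IsPeriodicPt.iterate_mod_apply hper]
    refine (sum_eq_single (k % m) (fun l hl hne => if_neg fun h => hne ?_)
      (by simp [Nat.mod_lt, hm])).trans (if_pos rfl)
    exact hinj l (mem_range.1 hl) (k % m) (Nat.mod_lt k hm) h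
  have v_off (i : n) (hi : ∀ k, σ^[k] j ≠ i) : v i = 0 :=
    sum_eq_zero fun k _ => if_neg (hi k)
  rw [mem_spectrum_iff_exists_mulVec_eq_smul]
  refine ⟨v, fun h0 => ?_, ?_⟩
  · simpa [h0, c_zero] using v_iterate 0
  · ext i
    simp only [mulVec_diagonal_mul_permMatrix, Pi.smul_apply, smul_eq_mul]
    by_cases hi : ∃ k, σ^[k] j = i
    · obtain ⟨k, rfl⟩ := hi
      rw [← Function.iterate_succ_apply' σ k j, v_iterate, v_iterate, c_succ]
    · simp only [not_exists] at hi
      have hσi (k : ℕ) : σ^[k] j ≠ σ i := fun hk => hi (k + m - 1) <| σ.injective <| by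
        rw [← Function.iterate_succ_apply' σ, Nat.succ_eq_add_one, Nat.sub_add_cancel (by omega),
          Function.iterate_add_apply, hper, hk]
      simp [v_off _ hi, v_off _ hσi]

theorem spectrum_eq_of_isCycleWithFixedPoints (ha : ∀ i, a i ≠ 0) {j : n} {m : ℕ}
    {F : Finset n} (h : IsCycleWithFixedPoints σ j m F) :
    spectrum K (diagonal a * σ.permMatrix K) =
      a '' F ∪ {μ | μ ^ m = ∏ k ∈ range m, a (σ^[k] j)} := by
  obtain ⟨hm, hper, hinj, hfix, hcov⟩ := h
  ext μ
  constructor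
  · intro hμ
    obtain ⟨v, hv0, hv⟩ := (mem_spectrum_iff_exists_mulVec_eq_smul _ _).1 hμ
    have hv' (i : n) : a i * v (σ i) = μ * v i := by
      simpa [mulVec_diagonal_mul_permMatrix] using congrFun hv i
    obtain ⟨i, hi⟩ := Function.ne_iff.1 hv0
    by_cases hiF : i ∈ F
    · have hai := hv' i
      rw [hfix i hiF] at hai
      exact Or.inl ⟨i, hiF, mul_right_cancel₀ hi hai⟩
    · obtain ⟨k, -, rfl⟩ := hcov i hiF
      exact Or.inr <|
        pow_eq_prod_of_iterate_eq hv' (ne_zero_of_apply_iterate_ne_zero ha hv' hi) hper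
  · rintro (⟨x, hx, rfl⟩ | hμ)
    · exact mem_spectrum_of_pow_eq_prod ha one_pos (hfix x hx) (by omega) (by simp)
    · exact mem_spectrum_of_pow_eq_prod ha hm hper hinj hμ

theorem exists_spectrum_eq_of_isCycleWithFixedPoints [IsAlgClosed K] (ha : ∀ i, a i ≠ 0)
    {j : n} {m : ℕ} {F : Finset n} (h : IsCycleWithFixedPoints σ j m F) :
    ∃ χ ∈ spectrum K (diagonal a * σ.permMatrix K),
      spectrum K (diagonal a * σ.permMatrix K) = a '' F ∪ {z | ∃ ζ, ζ ^ m = 1 ∧ z = χ * ζ} := by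
  obtain ⟨χ, hχ⟩ := IsAlgClosed.exists_pow_nat_eq (∏ k ∈ range m, a (σ^[k] j)) h.1
  have hχm : χ ^ m ≠ 0 := hχ ▸ prod_ne_zero_iff.2 fun k _ => ha _
  have hχ0 : χ ≠ 0 := (pow_ne_zero_iff h.1.ne').1 hχm
  rw [spectrum_eq_of_isCycleWithFixedPoints ha h, ← hχ]
  refine ⟨χ, Or.inr rfl, congrArg _ (Set.ext fun μ => ⟨fun hμ => ?_, ?_⟩)⟩
  · exact ⟨μ / χ, by rw [div_pow, hμ, div_self hχm], by field_simp⟩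
  · rintro ⟨ζ, hζ, rfl⟩
    simp [mul_pow, hζ]

end Spectrum

theorem IsPrimitiveRoot.pow_three_eq_one_iff {R : Type*} [CommRing R] [IsDomain R] {ω ζ : R}
    (hω : IsPrimitiveRoot ω 3) :
    ζ ^ 3 = 1 ↔ ζ = 1 ∨ ζ = ω ∨ ζ = ω ^ 2 := by
  refine ⟨fun h => ?_, ?_⟩
  · obtain ⟨i, hi, rfl⟩ := hω.eq_pow_of_pow_eq_one h
    interval_cases i <;> simp
  · rintro (rfl | rfl | rfl)
    · exact one_pow 3
    · exact hω.pow_eq_one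
    · rw [← pow_mul, mul_comm, pow_mul, hω.pow_eq_one, one_pow]

-- `List.permutations'` is structurally recursive, so the kernel enumerates it far faster than
-- `Finset.univ : Finset (Perm (Fin d))`.
@[elab_as_elim]
theorem Equiv.Perm.forall₂_of_forall₂_mem_permutations' {d : ℕ}
    {P : (Fin d → Fin d) → (Fin d → Fin d) → Prop}
    (h : ∀ l ∈ (List.finRange d).permutations', ∀ l' ∈ (List.finRange d).permutations',
      P (fun i => l.getD i i) (fun i => l'.getD i i))
    (σ τ : Perm (Fin d)) : P σ τ := by
  have mem (π : Perm (Fin d)) : List.ofFn π ∈ (List.finRange d).permutations' := by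
    rw [List.mem_permutations', List.ofFn_eq_map]
    exact π.map_finRange_perm
  have getD (π : Perm (Fin d)) : (fun i : Fin d => (List.ofFn π).getD i i) = π := by
    funext i
    simp
  simpa only [getD] using h _ (mem σ) _ (mem τ)

set_option synthInstance.maxSize 256 in
theorem exists_isCycleWithFixedPoints_of_braid {d : ℕ} (hd2 : 2 ≤ d) (hd5 : d ≤ 5)
    (σ τ : Perm (Fin d)) :
    (∀ x, σ (τ (σ x)) = τ (σ (τ x))) →
    (∀ s : Finset (Fin d), (∀ i ∈ s, σ i ∈ s ∧ τ i ∈ s) → s = ∅ ∨ s = univ) →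
    ∃ j, IsCycleWithFixedPoints σ j d ∅ ∨
      ((d = 3 ∨ d = 4) ∧ ∃ x, IsCycleWithFixedPoints σ j (d - 1) {x}) := by
  refine Perm.forall₂_of_forall₂_mem_permutations' ?_ σ τ
  interval_cases d <;> decide +kernel

theorem stmt5_general (d : ℕ) (hd2 : 2 ≤ d) (hd5 : d ≤ 5)
    (π₁ π₂ : Equiv.Perm (Fin d)) (D₁ D₂ : Matrix (Fin d) (Fin d) ℂ)
    (hD₁diag : D₁.IsDiag) (hD₂diag : D₂.IsDiag) (hD₁ : IsUnit D₁) (hD₂ : IsUnit D₂)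
    (A B : Matrix (Fin d) (Fin d) ℂ)
    (hA : A = D₁ * Equiv.Perm.permMatrix ℂ π₁)
    (hB : B = D₂ * Equiv.Perm.permMatrix ℂ π₂)
    (hbraid : A * B * A = B * A * B)
    (hirr : MatPairIrreducible A B)
    (hrou : ∀ μ ∈ spectrum ℂ A, IsRootOfUnity μ) :
    (∃ χ : ℂ, IsRootOfUnity χ ∧
        spectrum ℂ A = {z : ℂ | ∃ ζ : ℂ, ζ ^ d = 1 ∧ z = χ * ζ}) ∨
    (d = 3 ∧ ∃ α χ : ℂ, IsRootOfUnity α ∧ IsRootOfUnity χ ∧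
        spectrum ℂ A = {α, χ, -χ}) ∨
    (d = 4 ∧ ∃ α χ ω : ℂ, IsRootOfUnity α ∧ IsRootOfUnity χ ∧ IsPrimitiveRoot ω 3 ∧
        spectrum ℂ A = {α, χ, χ * ω, χ * ω ^ 2}) := by
  obtain ⟨a, rfl, ha⟩ := hD₁diag.exists_eq_diagonal_of_isUnit hD₁
  obtain ⟨b, rfl, hb⟩ := hD₂diag.exists_eq_diagonal_of_isUnit hD₂
  subst hA hB
  obtain ⟨j, hσ | ⟨hd, x, hσ⟩⟩ := exists_isCycleWithFixedPoints_of_braid hd2 hd5 π₁ π₂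
    (braid_apply_of_monomial_braid ha hb hbraid) (eq_empty_or_eq_univ_of_matPairIrreducible hirr)
  · obtain ⟨χ, hχ, hS⟩ := exists_spectrum_eq_of_isCycleWithFixedPoints ha hσ
    exact Or.inl ⟨χ, hrou χ hχ, by simpa using hS⟩
  obtain ⟨χ, hχ, hS⟩ := exists_spectrum_eq_of_isCycleWithFixedPoints ha hσ
  have hα : a x ∈ spectrum ℂ (diagonal a * π₁.permMatrix ℂ) := by simp [hS]
  rcases hd with rfl | rfl
  · refine Or.inr (Or.inl ⟨rfl, a x, χ, hrou _ hα, hrou χ hχ, ?_⟩)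
    rw [hS]
    ext z
    simp [or_and_right, exists_or]
  · have hω := Complex.isPrimitiveRoot_exp 3 (by norm_num)
    refine Or.inr (Or.inr ⟨rfl, a x, χ, _, hrou _ hα, hrou χ hχ, hω, ?_⟩)
    rw [hS]
    ext z
    simp [hω.pow_three_eq_one_iff, or_and_right, exists_or]

theorem stmt5 (d : ℕ) (hd2 : 2 ≤ d) (hd5 : d ≤ 5)
    (π₁ π₂ : Equiv.Perm (Fin d)) (D₁ D₂ : Matrix (Fin d) (Fin d) ℂ)
    (hD₁diag : D₁.IsDiag) (hD₂diag : D₂.IsDiag) (hD₁ : IsUnit D₁) (hD₂ : IsUnit D₂)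
    (A B : Matrix (Fin d) (Fin d) ℂ)
    (hA : A = D₁ * Equiv.Perm.permMatrix ℂ π₁)
    (hB : B = D₂ * Equiv.Perm.permMatrix ℂ π₂)
    (hbraid : A * B * A = B * A * B)
    (hirr : MatPairIrreducible A B)
    (hrou : ∀ μ ∈ spectrum ℂ A, IsRootOfUnity μ)
    (himp : MatGroupImprimitive (matGenGroup A B)) :
    (∃ χ : ℂ, IsRootOfUnity χ ∧
        spectrum ℂ A = {z : ℂ | ∃ ζ : ℂ, ζ ^ d = 1 ∧ z = χ * ζ}) ∨
    (d = 3 ∧ ∃ α χ : ℂ, IsRootOfUnity α ∧ IsRootOfUnity χ ∧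
        spectrum ℂ A = {α, χ, -χ}) ∨
    (d = 4 ∧ ∃ α χ ω : ℂ, IsRootOfUnity α ∧ IsRootOfUnity χ ∧ IsPrimitiveRoot ω 3 ∧
        spectrum ℂ A = {α, χ, χ * ω, χ * ω ^ 2}) :=
  stmt5_general d hd2 hd5 π₁ π₂ D₁ D₂ hD₁diag hD₂diag hD₁ hD₂ A B hA hB hbraid hirr hrou
end
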